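/- Let a : [0,∞) × ℝ³ → ℝ, b : [0,∞) × ℝ³ → ℝ³ and c : [0,∞) × ℝ³ → ℝ be smooth, and suppose that for all t ≥ 0 and all x, v ∈ ℝ³, (∂_t + v·∇_x − x·∇_v)[a(t,x) + b(t,x)·v + c(t,x)|v|²] = 0. Then there exist constants a₀ ∈ ℝ, α, β ∈ ℝ³, c₀, c₁, c₂ ∈ ℝ and b₁₂, b₁₃, b₂₃ ∈ ℝ such that for all t ≥ 0 and x, v ∈ ℝ³: a(t,x) + b(t,x)·v + c(t,x)|v|² = a₀ − β·X(t) + α·V(t) + b₁₂(x₂v₁ − x₁v₂) + b₁₃(x₃v₁ − x₁v₃) + b₂₃(x₃v₂ − x₂v₃) + (c₀ + c₂)|X(t)|² − 2c₁ X(t)·V(t) + (c₀ − c₂)|V(t)|². -/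

import Mathlib

open MeasureTheory ENNReal
open scoped Matrix

noncomputable section

abbrev E3 := EuclideanSpace ℝ (Fin 3)

/-- The Japanese bracket `⟨v⟩ = (1 + |v|²)^{1/2}`. -/
def jap (v : E3) : ℝ := Real.sqrt (1 + ‖v‖ ^ 2)

/-- Partial derivative of a function on `E3` in the `i`-th coordinate direction. -/
def pdE (i : Fin 3) (g : E3 → ℝ) : E3 → ℝ := fun x =>
  fderiv ℝ g x (EuclideanSpace.single i 1)

/-- `∂_{x_i}` acting on functions of `(x, v)`. -/
def pdX (i : Fin 3) (f : E3 → E3 → ℝ) : E3 → E3 → ℝ := fun x v =>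
  pdE i (fun x' => f x' v) x

/-- `∂_{v_i}` acting on functions of `(x, v)`. -/
def pdV (i : Fin 3) (f : E3 → E3 → ℝ) : E3 → E3 → ℝ := fun x v =>
  pdE i (fun v' => f x v') v

/-- Multi-index derivative `∂^α_x` for functions on `E3`. -/
def mDerivX (α : Fin 3 → ℕ) (g : E3 → ℝ) : E3 → ℝ :=
  (pdE 0)^[α 0] ((pdE 1)^[α 1] ((pdE 2)^[α 2] g))

/-- Multi-index derivative `∂^α_x ∂^β_v`. -/
def mDeriv (α β : Fin 3 → ℕ) (f : E3 → E3 → ℝ) : E3 → E3 → ℝ :=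
  (pdX 0)^[α 0] ((pdX 1)^[α 1] ((pdX 2)^[α 2]
    ((pdV 0)^[β 0] ((pdV 1)^[β 1] ((pdV 2)^[β 2] f)))))

/-- Total degree `|α|` of a multi-index. -/
def deg (α : Fin 3 → ℕ) : ℕ := ∑ i, α i

/-- Euclidean dot product on `ℝ³`. -/
def dot3 (x v : E3) : ℝ := ∑ i, x i * v i

/-- The matrix `a_{ij}(z) = |z|⁻¹ (δ_{ij} - z_i z_j / |z|²)`. -/
def aLandau (z : E3) (i j : Fin 3) : ℝ :=
  ‖z‖⁻¹ * ((if i = j then (1 : ℝ) else 0) - z i * z j / ‖z‖ ^ 2)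

/-- The Landau collision operator `Q(G, F)`. -/
def landauQ (G F : E3 → ℝ) (v : E3) : ℝ :=
  (∑ i, ∑ j, (∫ w : E3, aLandau (v - w) i j * G w) * pdE i (pdE j F) v)
    + 8 * Real.pi * G v * F v

/-- `X(t) = x cos t - v sin t`. -/
def Xrot (t : ℝ) (x v : E3) : E3 := Real.cos t • x - Real.sin t • v

/-- `V(t) = x sin t + v cos t`. -/
def Vrot (t : ℝ) (x v : E3) : E3 := Real.sin t • x + Real.cos t • v

open scoped ComplexOrder in
/-- The positive semidefinite square root of a positive semidefinite matrix
(the definition removed from Mathlib, restated with its old value). -/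
def Matrix.PosSemidef.sqrt {n 𝕜 : Type*} [Fintype n] [DecidableEq n] [RCLike 𝕜]
    {A : Matrix n n 𝕜} (hA : A.PosSemidef) : Matrix n n 𝕜 :=
  hA.1.eigenvectorUnitary.1 * Matrix.diagonal ((↑) ∘ (√·) ∘ hA.1.eigenvalues) *
    (star hA.1.eigenvectorUnitary : Matrix n n 𝕜)

/-- `tr |R|` where `|R| = √(Rᵀ R)` (over `ℝ`, `Rᴴ = Rᵀ`). -/
def traceAbs (R : Matrix (Fin 3) (Fin 3) ℝ) : ℝ :=
  (Matrix.posSemidef_conjTranspose_mul_self R).sqrt.trace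

/-- The parameter set `𝒪`. -/
def InO (a b c : ℝ) (R : Matrix (Fin 3) (Fin 3) ℝ) : Prop :=
  0 < a ∧ 0 < c ∧ 0 < a * c - b ^ 2 ∧ Rᵀ = -R ∧
    traceAbs R < 2 * Real.sqrt (a * c - b ^ 2)

/-- `Q̂ = (ac - b²) I + R²`. -/
def Qhat (a b c : ℝ) (R : Matrix (Fin 3) (Fin 3) ℝ) : Matrix (Fin 3) (Fin 3) ℝ :=
  (a * c - b ^ 2) • (1 : Matrix (Fin 3) (Fin 3) ℝ) + R * R

/-- The time-periodic Maxwell–Boltzmann distribution with parameters `(m, y, z, a, b, c, R)`. -/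
def MBdist (m : ℝ) (y z : E3) (a b c : ℝ) (R : Matrix (Fin 3) (Fin 3) ℝ)
    (t : ℝ) (x v : E3) : ℝ :=
  m * (Real.sqrt (Qhat a b c R).det / (2 * Real.pi) ^ 3) *
    Real.exp (-(1 / 2) *
      (a * ‖Xrot t x v - y‖ ^ 2 + 2 * b * dot3 (Xrot t x v - y) (Vrot t x v - z)
        + c * ‖Vrot t x v - z‖ ^ 2
        + 2 * ∑ i, ∑ j, (Xrot t x v - y) i * R i j * (Vrot t x v - z) j))

/-- The thirteen conserved quantities `Ψ₀(F)`. -/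
def psi0 (F : E3 → E3 → ℝ) :
    ℝ × (Fin 3 → ℝ) × (Fin 3 → ℝ) × ℝ × ℝ × ℝ × Matrix (Fin 3) (Fin 3) ℝ :=
  (∫ p : E3 × E3, F p.1 p.2,
   fun i => ∫ p : E3 × E3, p.1 i * F p.1 p.2,
   fun i => ∫ p : E3 × E3, p.2 i * F p.1 p.2,
   ∫ p : E3 × E3, ‖p.1‖ ^ 2 * F p.1 p.2,
   ∫ p : E3 × E3, dot3 p.1 p.2 * F p.1 p.2,
   ∫ p : E3 × E3, ‖p.2‖ ^ 2 * F p.1 p.2,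
   Matrix.of (fun i j => ∫ p : E3 × E3, (p.1 i * p.2 j - p.2 i * p.1 j) * F p.1 p.2))

/-- Sum of `f α β` over all multi-indices with `|α| + |β| ≤ N` (values in `ℝ≥0∞`). -/
def sumIdxE (N : ℕ) (f : (Fin 3 → ℕ) → (Fin 3 → ℕ) → ℝ≥0∞) : ℝ≥0∞ :=
  ∑ α : Fin 3 → Fin (N + 1), ∑ β : Fin 3 → Fin (N + 1),
    if (∑ i, (α i : ℕ)) + (∑ i, (β i : ℕ)) ≤ N
    then f (fun i => (α i : ℕ)) (fun i => (β i : ℕ)) else 0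

/-- Sum of `f α β` over all multi-indices with `|α| + |β| ≤ N` (values in `ℝ`). -/
def sumIdxR (N : ℕ) (f : (Fin 3 → ℕ) → (Fin 3 → ℕ) → ℝ) : ℝ :=
  ∑ α : Fin 3 → Fin (N + 1), ∑ β : Fin 3 → Fin (N + 1),
    if (∑ i, (α i : ℕ)) + (∑ i, (β i : ℕ)) ≤ N
    then f (fun i => (α i : ℕ)) (fun i => (β i : ℕ)) else 0

/-- Sum of `f α β` over all multi-indices with `|α| + |β| = N` (values in `ℝ`). -/
def sumIdxEqR (N : ℕ) (f : (Fin 3 → ℕ) → (Fin 3 → ℕ) → ℝ) : ℝ :=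
  ∑ α : Fin 3 → Fin (N + 1), ∑ β : Fin 3 → Fin (N + 1),
    if (∑ i, (α i : ℕ)) + (∑ i, (β i : ℕ)) = N
    then f (fun i => (α i : ℕ)) (fun i => (β i : ℕ)) else 0

/-- Sum of `f α` over all multi-indices with `|α| ≤ N` (values in `ℝ`). -/
def sumIdxXR (N : ℕ) (f : (Fin 3 → ℕ) → ℝ) : ℝ :=
  ∑ α : Fin 3 → Fin (N + 1),
    if (∑ i, (α i : ℕ)) ≤ N then f (fun i => (α i : ℕ)) else 0

/-- Weighted `L²` norm (as an extended nonnegative real). -/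
def wL2 (w g : E3 → E3 → ℝ) : ℝ≥0∞ :=
  eLpNorm (fun p : E3 × E3 => w p.1 p.2 * g p.1 p.2) 2 volume

/-- `Σ_{|α|+|β|≤5} ‖ M(t)^{θ(|α|+|β|)} ∂^α_x ∂^β_v (G - M(t)) ‖_{L²}`. -/
def normM (M : ℝ → E3 → E3 → ℝ) (θ : ℕ → ℝ) (G : E3 → E3 → ℝ) (t : ℝ) : ℝ≥0∞ :=
  sumIdxE 5 (fun α β =>
    wL2 (fun x v => M t x v ^ θ (deg α + deg β))
      (mDeriv α β (fun x v => G x v - M t x v)))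

/-- Smooth nonnegative solutions on `[0,∞)` of the Landau equation with harmonic potential. -/
def IsLandauSolution (F : ℝ → E3 → E3 → ℝ) : Prop :=
  ContDiffOn ℝ (⊤ : ℕ∞) (fun p : ℝ × E3 × E3 => F p.1 p.2.1 p.2.2)
      (Set.Ici (0 : ℝ) ×ˢ (Set.univ : Set (E3 × E3))) ∧
    (∀ t, 0 ≤ t → ∀ x v, 0 ≤ F t x v) ∧
    ∀ t, 0 ≤ t → ∀ x v : E3,
      derivWithin (fun s => F s x v) (Set.Ici 0) t
          + (∑ i, v i * pdX i (F t) x v) - (∑ i, x i * pdV i (F t) x v)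
        = landauQ (F t x) (F t x) v

/-- The normalized Maxwellian `μ`. -/
def mu0 (v : E3) : ℝ := (2 * Real.pi) ^ (-(3 : ℝ) / 2) * Real.exp (-‖v‖ ^ 2 / 2)

/-- Squared weighted norm `‖g‖²_{L²_l}`. -/
def L2wSq (l : ℝ) (g : E3 → ℝ) : ℝ := ∫ v : E3, jap v ^ (2 * l) * g v ^ 2

/-- `|∇g|²`. -/
def gradNormSq (g : E3 → ℝ) (x : E3) : ℝ := ∑ i, pdE i g x ^ 2

/-- Squared weighted norm `‖g‖²_{H¹_l}`. -/
def H1wSq (l : ℝ) (g : E3 → ℝ) : ℝ :=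
  L2wSq l g + ∫ v : E3, jap v ^ (2 * l) * gradNormSq g v

/-- Components of `𝕋_{𝕊²} g = v × ∇ g`. -/
def TsphComp (g : E3 → ℝ) (v : E3) (i : Fin 3) : ℝ :=
  v (i + 1) * pdE (i + 2) g v - v (i + 2) * pdE (i + 1) g v

/-- Squared weighted norm `‖𝕋_{𝕊²} g‖²_{L²_l}`. -/
def TsphL2Sq (l : ℝ) (g : E3 → ℝ) : ℝ :=
  ∫ v : E3, jap v ^ (2 * l) * ∑ i, TsphComp g v i ^ 2

/-- Squared Sobolev norm `‖g‖²_{H^N_{x,v}}`. -/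
def HSobSq (N : ℕ) (g : E3 → E3 → ℝ) : ℝ :=
  sumIdxR N (fun α β => ∫ p : E3 × E3, mDeriv α β g p.1 p.2 ^ 2)


-- ===================== auxiliary machinery for statement4 =====================

lemma s4_nsq (y : E3) : ‖y‖^2 = y 0 ^2 + y 1 ^2 + y 2 ^2 := by
  rw [EuclideanSpace.norm_eq, Real.sq_sqrt (by positivity)]
  simp [Fin.sum_univ_three]

def s4e (i : Fin 3) : E3 := EuclideanSpace.single i 1

lemma s4e_apply (i j : Fin 3) : s4e i j = if j = i then 1 else 0 := by
  simp [s4e, EuclideanSpace.single_apply]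

lemma s4_zero_apply (j : Fin 3) : (0 : E3) j = 0 := rfl
lemma s4_neg_apply (y : E3) (j : Fin 3) : (-y) j = -(y j) := rfl
lemma s4_add_apply (y z : E3) (j : Fin 3) : (y + z) j = y j + z j := rfl
lemma s4_sub_apply (y z : E3) (j : Fin 3) : (y - z) j = y j - z j := rfl
lemma s4_smul_apply (s : ℝ) (y : E3) (j : Fin 3) : (s • y) j = s * y j := rfl

lemma s4_dot3_exp (y w : E3) : dot3 y w = y 0 * w 0 + y 1 * w 1 + y 2 * w 2 := by
  simp [dot3, Fin.sum_univ_three]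

lemma s4_dot3_neg (y w : E3) : dot3 y (-w) = -dot3 y w := by
  simp [dot3]

lemma s4_dot3_zero (y : E3) : dot3 y 0 = 0 := by simp [dot3]

lemma s4_dot3_smul (s : ℝ) (y w : E3) : dot3 y (s • w) = s * dot3 y w := by
  rw [s4_dot3_exp, s4_dot3_exp, s4_smul_apply, s4_smul_apply, s4_smul_apply]
  ring

lemma s4_dot3_e (y : E3) (i : Fin 3) : dot3 y (s4e i) = y i := by
  simp [dot3, s4e, EuclideanSpace.single_apply]

lemma s4_nsq_e (i : Fin 3) : ‖s4e i‖^2 = 1 := by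
  rw [s4e, EuclideanSpace.norm_single]; norm_num

lemma s4_nsq_smul (s : ℝ) (y : E3) : ‖s • y‖^2 = s^2 * ‖y‖^2 := by
  rw [norm_smul]; simp [mul_pow, sq_abs]

lemma s4_vec_decomp (y : E3) : ∑ i, y i • EuclideanSpace.single i (1:ℝ) = y := by
  ext j
  rw [show (∑ i, y i • EuclideanSpace.single i (1:ℝ)) j
      = ∑ i, (y i • EuclideanSpace.single i (1:ℝ)) j from rfl]
  simp [EuclideanSpace.single_apply]

open Real Set in
lemma s4_transport (F : ℝ → E3 → E3 → ℝ)
    (hF : ContDiffOn ℝ (⊤ : ℕ∞) (fun p : ℝ × E3 × E3 => F p.1 p.2.1 p.2.2)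
      (Set.Ici (0:ℝ) ×ˢ (Set.univ : Set (E3 × E3))))
    (heq : ∀ t, 0 ≤ t → ∀ x v : E3,
      derivWithin (fun s => F s x v) (Set.Ici 0) t
        + (∑ i, v i * pdE i (fun x' => F t x' v) x)
        - (∑ i, x i * pdE i (fun v' => F t x v') v) = 0) :
    ∀ t, 0 ≤ t → ∀ x v, F t x v = F 0 (Xrot t x v) (Vrot t x v) := by
  intro t ht x v
  set S : Set (ℝ × E3 × E3) := Set.Ici (0:ℝ) ×ˢ (Set.univ : Set (E3 × E3)) with hS
  set x₀ : E3 := Xrot t x v with hx₀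
  set v₀ : E3 := Vrot t x v with hv₀
  set X : ℝ → E3 := fun s => Real.cos s • x₀ + Real.sin s • v₀ with hX
  set V : ℝ → E3 := fun s => - Real.sin s • x₀ + Real.cos s • v₀ with hV
  set ψ : ℝ → ℝ × E3 × E3 := fun s => (s, X s, V s) with hψ
  set φ : ℝ → ℝ := fun s => F s (X s) (V s) with hφ
  have hmem : ∀ s, 0 ≤ s → ψ s ∈ S := fun s hs => ⟨hs, trivial⟩
  have key : ∀ s ∈ Ico 0 t, HasDerivWithinAt φ 0 (Ici s) s := by
    intro s hs
    have hs0 : (0:ℝ) ≤ s := hs.1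
    have hdiff : DifferentiableWithinAt ℝ (fun p : ℝ × E3 × E3 => F p.1 p.2.1 p.2.2) S (ψ s) :=
      (hF.differentiableOn (by simp)) (ψ s) (hmem s hs0)
    set L := fderivWithin ℝ (fun p : ℝ × E3 × E3 => F p.1 p.2.1 p.2.2) S (ψ s) with hL
    have hLd : HasFDerivWithinAt (fun p : ℝ × E3 × E3 => F p.1 p.2.1 p.2.2) L S (ψ s) :=
      hdiff.hasFDerivWithinAt
    have hXd : HasDerivAt X (V s) s := by
      have h1 : HasDerivAt (fun r => Real.cos r • x₀) (-Real.sin s • x₀) s :=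
        (Real.hasDerivAt_cos s).smul_const x₀
      have h2 : HasDerivAt (fun r => Real.sin r • v₀) (Real.cos s • v₀) s :=
        (Real.hasDerivAt_sin s).smul_const v₀
      exact h1.add h2
    have hVd : HasDerivAt V (- X s) s := by
      have h1 : HasDerivAt (fun r => -Real.sin r • x₀) (-Real.cos s • x₀) s :=
        ((Real.hasDerivAt_sin s).neg).smul_const x₀
      have h2 : HasDerivAt (fun r => Real.cos r • v₀) (-Real.sin s • v₀) s :=
        (Real.hasDerivAt_cos s).smul_const v₀
      have h3 := h1.add h2
      have e : (-Real.cos s • x₀ + -Real.sin s • v₀) = - X s := by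
        ext j; simp [hX]; ring
      rw [e] at h3; exact h3
    have hψd : HasDerivWithinAt ψ (1, V s, - X s) (Ici 0) s :=
      HasDerivAt.hasDerivWithinAt (HasDerivAt.prodMk (hasDerivAt_id s) (HasDerivAt.prodMk hXd hVd))
    have hcomp' := hLd.comp_hasDerivWithinAt s hψd (fun r (hr : r ∈ Ici 0) => hmem r hr)
    have hcomp : HasDerivWithinAt φ (L (1, V s, - X s)) (Ici 0) s := hcomp'
    have hLt : L (1, 0, 0) = derivWithin (fun τ => F τ (X s) (V s)) (Ici 0) s := by
      set ι : ℝ → ℝ × E3 × E3 := fun τ => (τ, X s, V s) with hι'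
      have hLι : HasFDerivWithinAt (fun p : ℝ × E3 × E3 => F p.1 p.2.1 p.2.2) L S (ι s) := hLd
      have hι : HasDerivWithinAt ι ((1:ℝ), (0:E3), (0:E3)) (Ici 0) s :=
        HasDerivAt.hasDerivWithinAt (HasDerivAt.prodMk (hasDerivAt_id s) (HasDerivAt.prodMk (hasDerivAt_const s _) (hasDerivAt_const s _)))
      have h1 := hLι.comp_hasDerivWithinAt s hι (fun r (hr : r ∈ Ici 0) => ⟨hr, trivial⟩)
      have h2 : HasDerivWithinAt (fun τ => F τ (X s) (V s)) (L (1, 0, 0)) (Ici 0) s := h1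
      exact (h2.derivWithin (uniqueDiffOn_Ici 0 s hs0)).symm
    have hsliceX : ∀ i : Fin 3, L (0, EuclideanSpace.single i 1, 0)
        = pdE i (fun x' => F s x' (V s)) (X s) := by
      intro i
      set e : E3 := EuclideanSpace.single i (1:ℝ) with he
      set ℓ : ℝ → ℝ × E3 × E3 := fun r => (s, X s + r • e, V s) with hℓ'
      have hpt : ℓ 0 = ψ s := by simp [hℓ', hψ]
      have hLℓ : HasFDerivWithinAt (fun p : ℝ × E3 × E3 => F p.1 p.2.1 p.2.2) L S (ℓ 0) := by
        rw [hpt]; exact hLd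
      have hline : HasDerivAt (fun r : ℝ => X s + r • e) e 0 := by
        simpa using ((hasDerivAt_id (0:ℝ)).smul_const e).const_add (X s)
      have hℓd : HasDerivWithinAt ℓ ((0:ℝ), e, (0:E3)) (univ : Set ℝ) 0 :=
        HasDerivAt.hasDerivWithinAt (HasDerivAt.prodMk (hasDerivAt_const (0:ℝ) s) (HasDerivAt.prodMk hline (hasDerivAt_const (0:ℝ) _)))
      have h1' := hLℓ.comp_hasDerivWithinAt 0 hℓd (fun r _ => ⟨hs0, trivial⟩)
      have h1 : HasDerivAt (fun r : ℝ => F s (X s + r • e) (V s)) (L (0, e, 0)) 0 :=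
        hasDerivWithinAt_univ.mp h1'
      have hsl : ContDiff ℝ (⊤ : ℕ∞) (fun x' : E3 => F s x' (V s)) := by
        rw [← contDiffOn_univ]
        exact hF.comp ((contDiff_const.prodMk (contDiff_id.prodMk contDiff_const)).contDiffOn)
          (fun x' _ => ⟨hs0, trivial⟩)
      set line : ℝ → E3 := fun r => X s + r • e with hline'
      have hfd : HasFDerivAt (fun x' => F s x' (V s))
          (fderiv ℝ (fun x' => F s x' (V s)) (X s)) (line 0) := by
        have : line 0 = X s := by simp [hline']
        rw [this]
        exact (hsl.differentiable (by simp) (X s)).hasFDerivAt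
      have h2' := hfd.comp_hasDerivAt 0 (hline : HasDerivAt line e 0)
      have h2 : HasDerivAt (fun r : ℝ => F s (X s + r • e) (V s))
          (fderiv ℝ (fun x' => F s x' (V s)) (X s) e) 0 := h2'
      exact h1.unique h2
    have hsliceV : ∀ i : Fin 3, L (0, 0, EuclideanSpace.single i 1)
        = pdE i (fun v' => F s (X s) v') (V s) := by
      intro i
      set e : E3 := EuclideanSpace.single i (1:ℝ) with he
      set ℓ : ℝ → ℝ × E3 × E3 := fun r => (s, X s, V s + r • e) with hℓ'
      have hpt : ℓ 0 = ψ s := by simp [hℓ', hψ]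
      have hLℓ : HasFDerivWithinAt (fun p : ℝ × E3 × E3 => F p.1 p.2.1 p.2.2) L S (ℓ 0) := by
        rw [hpt]; exact hLd
      have hline : HasDerivAt (fun r : ℝ => V s + r • e) e 0 := by
        simpa using ((hasDerivAt_id (0:ℝ)).smul_const e).const_add (V s)
      have hℓd : HasDerivWithinAt ℓ ((0:ℝ), (0:E3), e) (univ : Set ℝ) 0 :=
        HasDerivAt.hasDerivWithinAt (HasDerivAt.prodMk (hasDerivAt_const (0:ℝ) s) (HasDerivAt.prodMk (hasDerivAt_const (0:ℝ) _) hline))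
      have h1' := hLℓ.comp_hasDerivWithinAt 0 hℓd (fun r _ => ⟨hs0, trivial⟩)
      have h1 : HasDerivAt (fun r : ℝ => F s (X s) (V s + r • e)) (L (0, 0, e)) 0 :=
        hasDerivWithinAt_univ.mp h1'
      have hsl : ContDiff ℝ (⊤ : ℕ∞) (fun v' : E3 => F s (X s) v') := by
        rw [← contDiffOn_univ]
        exact hF.comp ((contDiff_const.prodMk (contDiff_const.prodMk contDiff_id)).contDiffOn)
          (fun v' _ => ⟨hs0, trivial⟩)
      set line : ℝ → E3 := fun r => V s + r • e with hline'
      have hfd : HasFDerivAt (fun v' => F s (X s) v')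
          (fderiv ℝ (fun v' => F s (X s) v') (V s)) (line 0) := by
        have : line 0 = V s := by simp [hline']
        rw [this]
        exact (hsl.differentiable (by simp) (V s)).hasFDerivAt
      have h2' := hfd.comp_hasDerivAt 0 (hline : HasDerivAt line e 0)
      have h2 : HasDerivAt (fun r : ℝ => F s (X s) (V s + r • e))
          (fderiv ℝ (fun v' => F s (X s) v') (V s) e) 0 := h2'
      exact h1.unique h2
    have hsum1 : (∑ i, (V s) i • ((0:ℝ), EuclideanSpace.single i (1:ℝ), (0:E3)))
        = ((0:ℝ), V s, (0:E3)) := by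
      refine Prod.ext ?_ (Prod.ext ?_ ?_)
      · rw [Prod.fst_sum]; simp
      · rw [Prod.snd_sum, Prod.fst_sum]
        simpa using s4_vec_decomp (V s)
      · rw [Prod.snd_sum, Prod.snd_sum]; simp
    have hsum2 : (∑ i, (X s) i • ((0:ℝ), (0:E3), EuclideanSpace.single i (1:ℝ)))
        = ((0:ℝ), (0:E3), X s) := by
      refine Prod.ext ?_ (Prod.ext ?_ ?_)
      · rw [Prod.fst_sum]; simp
      · rw [Prod.snd_sum, Prod.fst_sum]; simp
      · rw [Prod.snd_sum, Prod.snd_sum]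
        simpa using s4_vec_decomp (X s)
    have e : ((1:ℝ), V s, - X s)
        = ((1:ℝ), (0:E3), (0:E3)) + (∑ i, (V s) i • ((0:ℝ), EuclideanSpace.single i (1:ℝ), (0:E3)))
          - (∑ i, (X s) i • ((0:ℝ), (0:E3), EuclideanSpace.single i (1:ℝ))) := by
      rw [hsum1, hsum2]
      refine Prod.ext ?_ (Prod.ext ?_ ?_) <;> simp
    have hdecomp : L (1, V s, - X s)
        = derivWithin (fun τ => F τ (X s) (V s)) (Ici 0) s
          + (∑ i, (V s) i * pdE i (fun x' => F s x' (V s)) (X s))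
          - (∑ i, (X s) i * pdE i (fun v' => F s (X s) v') (V s)) := by
      rw [e, map_sub, map_add, map_sum, map_sum]
      simp only [_root_.map_smul, smul_eq_mul]
      rw [hLt]
      congr 1
      · congr 1
        exact Finset.sum_congr rfl (fun i _ => by rw [hsliceX i])
      · exact Finset.sum_congr rfl (fun i _ => by rw [hsliceV i])
    rw [hdecomp, heq s hs0 (X s) (V s)] at hcomp
    exact hcomp.mono (Ici_subset_Ici.mpr hs0)
  have hcont : ContinuousOn φ (Icc 0 t) := by
    have hc : ContinuousOn (fun p : ℝ × E3 × E3 => F p.1 p.2.1 p.2.2) S := hF.continuousOn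
    have hψc : Continuous ψ := by
      apply continuous_id.prodMk
      apply Continuous.prodMk
      · exact (Real.continuous_cos.smul continuous_const).add (Real.continuous_sin.smul continuous_const)
      · exact ((Real.continuous_sin.neg).smul continuous_const).add (Real.continuous_cos.smul continuous_const)
    exact hc.comp hψc.continuousOn (fun r hr => hmem r hr.1)
  have hconst := constant_of_has_deriv_right_zero hcont key t (right_mem_Icc.mpr ht)
  have hXt : X t = x := by
    ext j
    have h := Real.sin_sq_add_cos_sq t
    simp [hX, hx₀, hv₀, Xrot, Vrot]
    linear_combination (x j) * h
  have hVt : V t = v := by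
    ext j
    have h := Real.sin_sq_add_cos_sq t
    simp [hV, hx₀, hv₀, Xrot, Vrot]
    linear_combination (v j) * h
  have hφt : φ t = F t x v := by show F t (X t) (V t) = F t x v; rw [hXt, hVt]
  have hφ0 : φ 0 = F 0 x₀ v₀ := by
    show F 0 (X 0) (V 0) = F 0 x₀ v₀
    have hX0 : X 0 = x₀ := by simp [hX]
    have hV0 : V 0 = v₀ := by simp [hV]
    rw [hX0, hV0]
  rw [← hφt, hconst, hφ0]

open Real Set in
lemma s4_smooth (a : ℝ → E3 → ℝ) (b : ℝ → E3 → E3) (c : ℝ → E3 → ℝ)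
    (ha : ContDiffOn ℝ (⊤ : ℕ∞) (fun p : ℝ × E3 => a p.1 p.2)
      (Set.Ici (0 : ℝ) ×ˢ (Set.univ : Set E3)))
    (hb : ContDiffOn ℝ (⊤ : ℕ∞) (fun p : ℝ × E3 => b p.1 p.2)
      (Set.Ici (0 : ℝ) ×ˢ (Set.univ : Set E3)))
    (hc : ContDiffOn ℝ (⊤ : ℕ∞) (fun p : ℝ × E3 => c p.1 p.2)
      (Set.Ici (0 : ℝ) ×ˢ (Set.univ : Set E3))) :
    ContDiffOn ℝ (⊤ : ℕ∞) (fun p : ℝ × E3 × E3 =>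
        a p.1 p.2.1 + dot3 (b p.1 p.2.1) p.2.2 + c p.1 p.2.1 * ‖p.2.2‖ ^ 2)
      (Set.Ici (0:ℝ) ×ˢ (Set.univ : Set (E3 × E3))) := by
  have hπ : ContDiff ℝ (⊤ : ℕ∞) (fun p : ℝ × E3 × E3 => (p.1, p.2.1)) :=
    contDiff_fst.prodMk (contDiff_fst.comp contDiff_snd)
  have hmaps : MapsTo (fun p : ℝ × E3 × E3 => (p.1, p.2.1))
      (Set.Ici (0:ℝ) ×ˢ (Set.univ : Set (E3 × E3))) (Set.Ici (0:ℝ) ×ˢ (Set.univ : Set E3)) :=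
    fun p hp => ⟨hp.1, trivial⟩
  have ha' : ContDiffOn ℝ (⊤ : ℕ∞) (fun p : ℝ × E3 × E3 => a p.1 p.2.1)
      (Set.Ici (0:ℝ) ×ˢ (Set.univ : Set (E3 × E3))) := ha.comp hπ.contDiffOn hmaps
  have hb' : ContDiffOn ℝ (⊤ : ℕ∞) (fun p : ℝ × E3 × E3 => b p.1 p.2.1)
      (Set.Ici (0:ℝ) ×ˢ (Set.univ : Set (E3 × E3))) := hb.comp hπ.contDiffOn hmaps
  have hc' : ContDiffOn ℝ (⊤ : ℕ∞) (fun p : ℝ × E3 × E3 => c p.1 p.2.1)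
      (Set.Ici (0:ℝ) ×ˢ (Set.univ : Set (E3 × E3))) := hc.comp hπ.contDiffOn hmaps
  have hv : ContDiff ℝ (⊤ : ℕ∞) (fun p : ℝ × E3 × E3 => p.2.2) := contDiff_snd.comp contDiff_snd
  have hdot : ContDiffOn ℝ (⊤ : ℕ∞) (fun p : ℝ × E3 × E3 => dot3 (b p.1 p.2.1) p.2.2)
      (Set.Ici (0:ℝ) ×ˢ (Set.univ : Set (E3 × E3))) := by
    have he : ∀ p : ℝ × E3 × E3, dot3 (b p.1 p.2.1) p.2.2 = ∑ i, (b p.1 p.2.1) i * p.2.2 i :=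
      fun p => rfl
    simp only [he]
    apply ContDiffOn.sum
    intro i _
    exact (((EuclideanSpace.proj i : E3 →L[ℝ] ℝ).contDiff.comp_contDiffOn hb')).mul
      (((EuclideanSpace.proj i : E3 →L[ℝ] ℝ).contDiff.comp hv).contDiffOn)
  have hnorm : ContDiff ℝ (⊤ : ℕ∞) (fun p : ℝ × E3 × E3 => ‖p.2.2‖ ^ 2) :=
    ContDiff.norm_sq ℝ hv
  exact (ha'.add hdot).add (hc'.mul hnorm.contDiffOn)


set_option maxHeartbeats 2000000

/-- classification of macroscopic quantities transported by the
harmonic streaming operator. -/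
theorem statement4 (a : ℝ → E3 → ℝ) (b : ℝ → E3 → E3) (c : ℝ → E3 → ℝ)
    (ha : ContDiffOn ℝ (⊤ : ℕ∞) (fun p : ℝ × E3 => a p.1 p.2)
      (Set.Ici (0 : ℝ) ×ˢ (Set.univ : Set E3)))
    (hb : ContDiffOn ℝ (⊤ : ℕ∞) (fun p : ℝ × E3 => b p.1 p.2)
      (Set.Ici (0 : ℝ) ×ˢ (Set.univ : Set E3)))
    (hc : ContDiffOn ℝ (⊤ : ℕ∞) (fun p : ℝ × E3 => c p.1 p.2)
      (Set.Ici (0 : ℝ) ×ˢ (Set.univ : Set E3)))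
    (heq : ∀ t, 0 ≤ t → ∀ x v : E3,
      derivWithin (fun s => a s x + dot3 (b s x) v + c s x * ‖v‖ ^ 2) (Set.Ici 0) t
          + (∑ i, v i * pdE i (fun x' => a t x' + dot3 (b t x') v + c t x' * ‖v‖ ^ 2) x)
          - (∑ i, x i * pdE i (fun v' => a t x + dot3 (b t x) v' + c t x * ‖v'‖ ^ 2) v)
        = 0) :
    ∃ (a₀ : ℝ) (av bv : E3) (c₀ c₁ c₂ b₁₂ b₁₃ b₂₃ : ℝ),
      ∀ t, 0 ≤ t → ∀ x v : E3,
        a t x + dot3 (b t x) v + c t x * ‖v‖ ^ 2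
          = a₀ - dot3 bv (Xrot t x v) + dot3 av (Vrot t x v)
            + b₁₂ * (x 1 * v 0 - x 0 * v 1) + b₁₃ * (x 2 * v 0 - x 0 * v 2)
            + b₂₃ * (x 2 * v 1 - x 1 * v 2)
            + (c₀ + c₂) * ‖Xrot t x v‖ ^ 2 - 2 * c₁ * dot3 (Xrot t x v) (Vrot t x v)
            + (c₀ - c₂) * ‖Vrot t x v‖ ^ 2 := by
    classical
  have hchar := s4_transport (fun t x v => a t x + dot3 (b t x) v + c t x * ‖v‖ ^ 2)
    (s4_smooth a b c ha hb hc) heq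
  have hhalf : ∀ x w : E3, a 0 w + dot3 (b 0 w) x + c 0 w * ‖x‖ ^ 2
      = a (Real.pi/2) x - dot3 (b (Real.pi/2) x) w + c (Real.pi/2) x * ‖w‖ ^ 2 := by
    intro x w
    have h : a (Real.pi/2) x + dot3 (b (Real.pi/2) x) (-w) + c (Real.pi/2) x * ‖(-w : E3)‖ ^ 2
        = a 0 (Xrot (Real.pi/2) x (-w)) + dot3 (b 0 (Xrot (Real.pi/2) x (-w))) (Vrot (Real.pi/2) x (-w))
          + c 0 (Xrot (Real.pi/2) x (-w)) * ‖Vrot (Real.pi/2) x (-w)‖ ^ 2 :=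
      hchar (Real.pi/2) (by positivity) x (-w)
    have hx : Xrot (Real.pi/2) x (-w) = w := by
      ext j
      show Real.cos (Real.pi/2) * x j - Real.sin (Real.pi/2) * (-(w j)) = w j
      rw [Real.cos_pi_div_two, Real.sin_pi_div_two]; ring
    have hv : Vrot (Real.pi/2) x (-w) = x := by
      ext j
      show Real.sin (Real.pi/2) * x j + Real.cos (Real.pi/2) * (-(w j)) = x j
      rw [Real.cos_pi_div_two, Real.sin_pi_div_two]; ring
    rw [hx, hv, s4_dot3_neg, norm_neg] at h
    linarith [h]
  have ha0 : ∀ w : E3, a 0 w = a (Real.pi/2) 0 - (b (Real.pi/2) 0 0 * w 0 + b (Real.pi/2) 0 1 * w 1 + b (Real.pi/2) 0 2 * w 2) + c (Real.pi/2) 0 * ‖w‖ ^ 2 := by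
    intro w
    have h := hhalf 0 w
    rw [s4_dot3_zero, s4_dot3_exp (b (Real.pi/2) 0) w] at h
    simp only [norm_zero] at h
    linarith [h]
  have hb0 : ∀ (i : Fin 3) (w : E3), b 0 w i =
      (a (Real.pi/2) (s4e i) - a (Real.pi/2) (-s4e i)) / 2
      - (b (Real.pi/2) (s4e i) 0 - b (Real.pi/2) (-s4e i) 0) / 2 * w 0 - (b (Real.pi/2) (s4e i) 1 - b (Real.pi/2) (-s4e i) 1) / 2 * w 1 - (b (Real.pi/2) (s4e i) 2 - b (Real.pi/2) (-s4e i) 2) / 2 * w 2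
      + (c (Real.pi/2) (s4e i) - c (Real.pi/2) (-s4e i)) / 2 * ‖w‖ ^ 2 := by
    intro i w
    have hp := hhalf (s4e i) w
    have hm := hhalf (-s4e i) w
    rw [s4_dot3_e, s4_nsq_e, s4_dot3_exp (b (Real.pi/2) (s4e i)) w] at hp
    rw [s4_dot3_neg, s4_dot3_e, norm_neg, s4_nsq_e, s4_dot3_exp (b (Real.pi/2) (-s4e i)) w] at hm
    linear_combination (hp - hm) / 2
  have hc0 : ∀ w : E3, c 0 w = ((a (Real.pi/2) (s4e 0) + a (Real.pi/2) (-s4e 0)) / 2 - a (Real.pi/2) 0)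
      + (b (Real.pi/2) 0 0 - (b (Real.pi/2) (s4e 0) 0 + b (Real.pi/2) (-s4e 0) 0) / 2) * w 0
      + (b (Real.pi/2) 0 1 - (b (Real.pi/2) (s4e 0) 1 + b (Real.pi/2) (-s4e 0) 1) / 2) * w 1
      + (b (Real.pi/2) 0 2 - (b (Real.pi/2) (s4e 0) 2 + b (Real.pi/2) (-s4e 0) 2) / 2) * w 2
      + ((c (Real.pi/2) (s4e 0) + c (Real.pi/2) (-s4e 0)) / 2 - c (Real.pi/2) 0) * ‖w‖ ^ 2 := by
    intro w
    have hp := hhalf (s4e 0) w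
    have hm := hhalf (-s4e 0) w
    rw [s4_dot3_e, s4_nsq_e, s4_dot3_exp (b (Real.pi/2) (s4e 0)) w] at hp
    rw [s4_dot3_neg, s4_dot3_e, norm_neg, s4_nsq_e, s4_dot3_exp (b (Real.pi/2) (-s4e 0)) w] at hm
    linear_combination hp / 2 + hm / 2 - ha0 w
  have hq1 : ∀ u : E3, a 0 (-u) + (b 0 (-u) 0 * u 0 + b 0 (-u) 1 * u 1 + b 0 (-u) 2 * u 2) + c 0 (-u) * ‖u‖ ^ 2
      = a (Real.pi/4) 0 + Real.sqrt 2 * (b (Real.pi/4) 0 0 * u 0 + b (Real.pi/4) 0 1 * u 1 + b (Real.pi/4) 0 2 * u 2) + 2 * c (Real.pi/4) 0 * ‖u‖ ^ 2 := by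
    intro u
    have h2 : Real.sqrt 2 * Real.sqrt 2 = 2 := Real.mul_self_sqrt (by norm_num)
    have h : a (Real.pi/4) 0 + dot3 (b (Real.pi/4) 0) (Real.sqrt 2 • u) + c (Real.pi/4) 0 * ‖Real.sqrt 2 • u‖ ^ 2
        = a 0 (Xrot (Real.pi/4) 0 (Real.sqrt 2 • u)) + dot3 (b 0 (Xrot (Real.pi/4) 0 (Real.sqrt 2 • u))) (Vrot (Real.pi/4) 0 (Real.sqrt 2 • u))
          + c 0 (Xrot (Real.pi/4) 0 (Real.sqrt 2 • u)) * ‖Vrot (Real.pi/4) 0 (Real.sqrt 2 • u)‖ ^ 2 :=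
      hchar (Real.pi/4) (by positivity) 0 (Real.sqrt 2 • u)
    have hx : Xrot (Real.pi/4) 0 (Real.sqrt 2 • u) = -u := by
      ext j
      show Real.cos (Real.pi/4) * (0:E3) j - Real.sin (Real.pi/4) * (Real.sqrt 2 * u j) = -(u j)
      rw [Real.sin_pi_div_four, s4_zero_apply]
      linear_combination (-(u j)/2) * h2
    have hv : Vrot (Real.pi/4) 0 (Real.sqrt 2 • u) = u := by
      ext j
      show Real.sin (Real.pi/4) * (0:E3) j + Real.cos (Real.pi/4) * (Real.sqrt 2 * u j) = u j
      rw [Real.cos_pi_div_four, s4_zero_apply]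
      linear_combination (u j / 2) * h2
    rw [hx, hv] at h
    rw [s4_dot3_smul, s4_dot3_exp (b (Real.pi/4) 0) u, s4_dot3_exp (b 0 (-u)) u, s4_nsq_smul, Real.sq_sqrt (by norm_num : (0:ℝ) ≤ 2)] at h
    linarith [h]
  have hq2 : ∀ u : E3, a 0 (-u) - (b 0 (-u) 0 * u 0 + b 0 (-u) 1 * u 1 + b 0 (-u) 2 * u 2) + c 0 (-u) * ‖u‖ ^ 2
      = a (Real.pi - Real.pi/4) 0 + Real.sqrt 2 * (b (Real.pi - Real.pi/4) 0 0 * u 0 + b (Real.pi - Real.pi/4) 0 1 * u 1 + b (Real.pi - Real.pi/4) 0 2 * u 2) + 2 * c (Real.pi - Real.pi/4) 0 * ‖u‖ ^ 2 := by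
    intro u
    have h2 : Real.sqrt 2 * Real.sqrt 2 = 2 := Real.mul_self_sqrt (by norm_num)
    have h : a (Real.pi - Real.pi/4) 0 + dot3 (b (Real.pi - Real.pi/4) 0) (Real.sqrt 2 • u) + c (Real.pi - Real.pi/4) 0 * ‖Real.sqrt 2 • u‖ ^ 2
        = a 0 (Xrot (Real.pi - Real.pi/4) 0 (Real.sqrt 2 • u)) + dot3 (b 0 (Xrot (Real.pi - Real.pi/4) 0 (Real.sqrt 2 • u))) (Vrot (Real.pi - Real.pi/4) 0 (Real.sqrt 2 • u))
          + c 0 (Xrot (Real.pi - Real.pi/4) 0 (Real.sqrt 2 • u)) * ‖Vrot (Real.pi - Real.pi/4) 0 (Real.sqrt 2 • u)‖ ^ 2 :=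
      hchar (Real.pi - Real.pi/4) (by linarith [Real.pi_pos]) 0 (Real.sqrt 2 • u)
    have hx : Xrot (Real.pi - Real.pi/4) 0 (Real.sqrt 2 • u) = -u := by
      ext j
      show Real.cos (Real.pi - Real.pi/4) * (0:E3) j - Real.sin (Real.pi - Real.pi/4) * (Real.sqrt 2 * u j) = -(u j)
      rw [Real.sin_pi_sub, Real.sin_pi_div_four, s4_zero_apply]
      linear_combination (-(u j)/2) * h2
    have hv : Vrot (Real.pi - Real.pi/4) 0 (Real.sqrt 2 • u) = -u := by
      ext j
      show Real.sin (Real.pi - Real.pi/4) * (0:E3) j + Real.cos (Real.pi - Real.pi/4) * (Real.sqrt 2 * u j) = -(u j)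
      rw [Real.cos_pi_sub, Real.cos_pi_div_four, s4_zero_apply]
      linear_combination (-(u j)/2) * h2
    rw [hx, hv] at h
    rw [s4_dot3_smul, s4_dot3_exp (b (Real.pi - Real.pi/4) 0) u, s4_dot3_neg, s4_dot3_exp (b 0 (-u)) u, norm_neg, s4_nsq_smul, Real.sq_sqrt (by norm_num : (0:ℝ) ≤ 2)] at h
    linarith [h]
  simp only [ha0, hb0, hc0, s4_neg_apply, norm_neg] at hq1 hq2
  have n01 : ‖s4e 0 + s4e 1‖ ^ 2 = 2 := by
    rw [s4_nsq]; norm_num [s4_add_apply, s4e_apply, Fin.ext_iff]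
  have n02 : ‖s4e 0 + s4e 2‖ ^ 2 = 2 := by
    rw [s4_nsq]; norm_num [s4_add_apply, s4e_apply, Fin.ext_iff]
  have n12 : ‖s4e 1 + s4e 2‖ ^ 2 = 2 := by
    rw [s4_nsq]; norm_num [s4_add_apply, s4e_apply, Fin.ext_iff]
  have E1p1k0 := hq1 (s4e 0)
  simp only [s4_smul_apply, s4_add_apply, s4_neg_apply, s4e_apply, s4_zero_apply, norm_neg, s4_nsq_smul, s4_nsq_e, n01, n02, n12, norm_zero] at E1p1k0
  norm_num [Fin.ext_iff] at E1p1k0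
  have E2p1k0 := hq2 (s4e 0)
  simp only [s4_smul_apply, s4_add_apply, s4_neg_apply, s4e_apply, s4_zero_apply, norm_neg, s4_nsq_smul, s4_nsq_e, n01, n02, n12, norm_zero] at E2p1k0
  norm_num [Fin.ext_iff] at E2p1k0
  have E1m1k0 := hq1 (-s4e 0)
  simp only [s4_smul_apply, s4_add_apply, s4_neg_apply, s4e_apply, s4_zero_apply, norm_neg, s4_nsq_smul, s4_nsq_e, n01, n02, n12, norm_zero] at E1m1k0
  norm_num [Fin.ext_iff] at E1m1k0
  have E2m1k0 := hq2 (-s4e 0)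
  simp only [s4_smul_apply, s4_add_apply, s4_neg_apply, s4e_apply, s4_zero_apply, norm_neg, s4_nsq_smul, s4_nsq_e, n01, n02, n12, norm_zero] at E2m1k0
  norm_num [Fin.ext_iff] at E2m1k0
  have E1p2k0 := hq1 ((2:ℝ) • s4e 0)
  simp only [s4_smul_apply, s4_add_apply, s4_neg_apply, s4e_apply, s4_zero_apply, norm_neg, s4_nsq_smul, s4_nsq_e, n01, n02, n12, norm_zero] at E1p2k0
  norm_num [Fin.ext_iff] at E1p2k0
  have E2p2k0 := hq2 ((2:ℝ) • s4e 0)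
  simp only [s4_smul_apply, s4_add_apply, s4_neg_apply, s4e_apply, s4_zero_apply, norm_neg, s4_nsq_smul, s4_nsq_e, n01, n02, n12, norm_zero] at E2p2k0
  norm_num [Fin.ext_iff] at E2p2k0
  have E1m2k0 := hq1 ((-2:ℝ) • s4e 0)
  simp only [s4_smul_apply, s4_add_apply, s4_neg_apply, s4e_apply, s4_zero_apply, norm_neg, s4_nsq_smul, s4_nsq_e, n01, n02, n12, norm_zero] at E1m2k0
  norm_num [Fin.ext_iff] at E1m2k0
  have E2m2k0 := hq2 ((-2:ℝ) • s4e 0)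
  simp only [s4_smul_apply, s4_add_apply, s4_neg_apply, s4e_apply, s4_zero_apply, norm_neg, s4_nsq_smul, s4_nsq_e, n01, n02, n12, norm_zero] at E2m2k0
  norm_num [Fin.ext_iff] at E2m2k0
  have E1p1k1 := hq1 (s4e 1)
  simp only [s4_smul_apply, s4_add_apply, s4_neg_apply, s4e_apply, s4_zero_apply, norm_neg, s4_nsq_smul, s4_nsq_e, n01, n02, n12, norm_zero] at E1p1k1
  norm_num [Fin.ext_iff] at E1p1k1
  have E2p1k1 := hq2 (s4e 1)
  simp only [s4_smul_apply, s4_add_apply, s4_neg_apply, s4e_apply, s4_zero_apply, norm_neg, s4_nsq_smul, s4_nsq_e, n01, n02, n12, norm_zero] at E2p1k1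
  norm_num [Fin.ext_iff] at E2p1k1
  have E1m1k1 := hq1 (-s4e 1)
  simp only [s4_smul_apply, s4_add_apply, s4_neg_apply, s4e_apply, s4_zero_apply, norm_neg, s4_nsq_smul, s4_nsq_e, n01, n02, n12, norm_zero] at E1m1k1
  norm_num [Fin.ext_iff] at E1m1k1
  have E2m1k1 := hq2 (-s4e 1)
  simp only [s4_smul_apply, s4_add_apply, s4_neg_apply, s4e_apply, s4_zero_apply, norm_neg, s4_nsq_smul, s4_nsq_e, n01, n02, n12, norm_zero] at E2m1k1
  norm_num [Fin.ext_iff] at E2m1k1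
  have E1p2k1 := hq1 ((2:ℝ) • s4e 1)
  simp only [s4_smul_apply, s4_add_apply, s4_neg_apply, s4e_apply, s4_zero_apply, norm_neg, s4_nsq_smul, s4_nsq_e, n01, n02, n12, norm_zero] at E1p2k1
  norm_num [Fin.ext_iff] at E1p2k1
  have E2p2k1 := hq2 ((2:ℝ) • s4e 1)
  simp only [s4_smul_apply, s4_add_apply, s4_neg_apply, s4e_apply, s4_zero_apply, norm_neg, s4_nsq_smul, s4_nsq_e, n01, n02, n12, norm_zero] at E2p2k1
  norm_num [Fin.ext_iff] at E2p2k1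
  have E1m2k1 := hq1 ((-2:ℝ) • s4e 1)
  simp only [s4_smul_apply, s4_add_apply, s4_neg_apply, s4e_apply, s4_zero_apply, norm_neg, s4_nsq_smul, s4_nsq_e, n01, n02, n12, norm_zero] at E1m2k1
  norm_num [Fin.ext_iff] at E1m2k1
  have E2m2k1 := hq2 ((-2:ℝ) • s4e 1)
  simp only [s4_smul_apply, s4_add_apply, s4_neg_apply, s4e_apply, s4_zero_apply, norm_neg, s4_nsq_smul, s4_nsq_e, n01, n02, n12, norm_zero] at E2m2k1
  norm_num [Fin.ext_iff] at E2m2k1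
  have E1p1k2 := hq1 (s4e 2)
  simp only [s4_smul_apply, s4_add_apply, s4_neg_apply, s4e_apply, s4_zero_apply, norm_neg, s4_nsq_smul, s4_nsq_e, n01, n02, n12, norm_zero] at E1p1k2
  norm_num [Fin.ext_iff] at E1p1k2
  have E2p1k2 := hq2 (s4e 2)
  simp only [s4_smul_apply, s4_add_apply, s4_neg_apply, s4e_apply, s4_zero_apply, norm_neg, s4_nsq_smul, s4_nsq_e, n01, n02, n12, norm_zero] at E2p1k2
  norm_num [Fin.ext_iff] at E2p1k2
  have E1m1k2 := hq1 (-s4e 2)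
  simp only [s4_smul_apply, s4_add_apply, s4_neg_apply, s4e_apply, s4_zero_apply, norm_neg, s4_nsq_smul, s4_nsq_e, n01, n02, n12, norm_zero] at E1m1k2
  norm_num [Fin.ext_iff] at E1m1k2
  have E2m1k2 := hq2 (-s4e 2)
  simp only [s4_smul_apply, s4_add_apply, s4_neg_apply, s4e_apply, s4_zero_apply, norm_neg, s4_nsq_smul, s4_nsq_e, n01, n02, n12, norm_zero] at E2m1k2
  norm_num [Fin.ext_iff] at E2m1k2
  have E1p2k2 := hq1 ((2:ℝ) • s4e 2)
  simp only [s4_smul_apply, s4_add_apply, s4_neg_apply, s4e_apply, s4_zero_apply, norm_neg, s4_nsq_smul, s4_nsq_e, n01, n02, n12, norm_zero] at E1p2k2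
  norm_num [Fin.ext_iff] at E1p2k2
  have E2p2k2 := hq2 ((2:ℝ) • s4e 2)
  simp only [s4_smul_apply, s4_add_apply, s4_neg_apply, s4e_apply, s4_zero_apply, norm_neg, s4_nsq_smul, s4_nsq_e, n01, n02, n12, norm_zero] at E2p2k2
  norm_num [Fin.ext_iff] at E2p2k2
  have E1m2k2 := hq1 ((-2:ℝ) • s4e 2)
  simp only [s4_smul_apply, s4_add_apply, s4_neg_apply, s4e_apply, s4_zero_apply, norm_neg, s4_nsq_smul, s4_nsq_e, n01, n02, n12, norm_zero] at E1m2k2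
  norm_num [Fin.ext_iff] at E1m2k2
  have E2m2k2 := hq2 ((-2:ℝ) • s4e 2)
  simp only [s4_smul_apply, s4_add_apply, s4_neg_apply, s4e_apply, s4_zero_apply, norm_neg, s4_nsq_smul, s4_nsq_e, n01, n02, n12, norm_zero] at E2m2k2
  norm_num [Fin.ext_iff] at E2m2k2
  have E1x01 := hq1 (s4e 0 + s4e 1)
  simp only [s4_smul_apply, s4_add_apply, s4_neg_apply, s4e_apply, s4_zero_apply, norm_neg, s4_nsq_smul, s4_nsq_e, n01, n02, n12, norm_zero] at E1x01
  norm_num [Fin.ext_iff] at E1x01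
  have E2x01 := hq2 (s4e 0 + s4e 1)
  simp only [s4_smul_apply, s4_add_apply, s4_neg_apply, s4e_apply, s4_zero_apply, norm_neg, s4_nsq_smul, s4_nsq_e, n01, n02, n12, norm_zero] at E2x01
  norm_num [Fin.ext_iff] at E2x01
  have E1x02 := hq1 (s4e 0 + s4e 2)
  simp only [s4_smul_apply, s4_add_apply, s4_neg_apply, s4e_apply, s4_zero_apply, norm_neg, s4_nsq_smul, s4_nsq_e, n01, n02, n12, norm_zero] at E1x02
  norm_num [Fin.ext_iff] at E1x02
  have E2x02 := hq2 (s4e 0 + s4e 2)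
  simp only [s4_smul_apply, s4_add_apply, s4_neg_apply, s4e_apply, s4_zero_apply, norm_neg, s4_nsq_smul, s4_nsq_e, n01, n02, n12, norm_zero] at E2x02
  norm_num [Fin.ext_iff] at E2x02
  have E1x12 := hq1 (s4e 1 + s4e 2)
  simp only [s4_smul_apply, s4_add_apply, s4_neg_apply, s4e_apply, s4_zero_apply, norm_neg, s4_nsq_smul, s4_nsq_e, n01, n02, n12, norm_zero] at E1x12
  norm_num [Fin.ext_iff] at E1x12
  have E2x12 := hq2 (s4e 1 + s4e 2)
  simp only [s4_smul_apply, s4_add_apply, s4_neg_apply, s4e_apply, s4_zero_apply, norm_neg, s4_nsq_smul, s4_nsq_e, n01, n02, n12, norm_zero] at E2x12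
  norm_num [Fin.ext_iff] at E2x12
  have E1xm01 := hq1 (-(s4e 0 + s4e 1))
  simp only [s4_smul_apply, s4_add_apply, s4_neg_apply, s4e_apply, s4_zero_apply, norm_neg, s4_nsq_smul, s4_nsq_e, n01, n02, n12, norm_zero] at E1xm01
  norm_num [Fin.ext_iff] at E1xm01
  have E2xm01 := hq2 (-(s4e 0 + s4e 1))
  simp only [s4_smul_apply, s4_add_apply, s4_neg_apply, s4e_apply, s4_zero_apply, norm_neg, s4_nsq_smul, s4_nsq_e, n01, n02, n12, norm_zero] at E2xm01
  norm_num [Fin.ext_iff] at E2xm01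
  have E1xm02 := hq1 (-(s4e 0 + s4e 2))
  simp only [s4_smul_apply, s4_add_apply, s4_neg_apply, s4e_apply, s4_zero_apply, norm_neg, s4_nsq_smul, s4_nsq_e, n01, n02, n12, norm_zero] at E1xm02
  norm_num [Fin.ext_iff] at E1xm02
  have E2xm02 := hq2 (-(s4e 0 + s4e 2))
  simp only [s4_smul_apply, s4_add_apply, s4_neg_apply, s4e_apply, s4_zero_apply, norm_neg, s4_nsq_smul, s4_nsq_e, n01, n02, n12, norm_zero] at E2xm02
  norm_num [Fin.ext_iff] at E2xm02
  have E1xm12 := hq1 (-(s4e 1 + s4e 2))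
  simp only [s4_smul_apply, s4_add_apply, s4_neg_apply, s4e_apply, s4_zero_apply, norm_neg, s4_nsq_smul, s4_nsq_e, n01, n02, n12, norm_zero] at E1xm12
  norm_num [Fin.ext_iff] at E1xm12
  have E2xm12 := hq2 (-(s4e 1 + s4e 2))
  simp only [s4_smul_apply, s4_add_apply, s4_neg_apply, s4e_apply, s4_zero_apply, norm_neg, s4_nsq_smul, s4_nsq_e, n01, n02, n12, norm_zero] at E2xm12
  norm_num [Fin.ext_iff] at E2xm12
  have E1z := hq1 (0 : E3)
  simp only [s4_smul_apply, s4_add_apply, s4_neg_apply, s4e_apply, s4_zero_apply, norm_neg, s4_nsq_smul, s4_nsq_e, n01, n02, n12, norm_zero] at E1z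
  norm_num [Fin.ext_iff] at E1z
  have E2z := hq2 (0 : E3)
  simp only [s4_smul_apply, s4_add_apply, s4_neg_apply, s4e_apply, s4_zero_apply, norm_neg, s4_nsq_smul, s4_nsq_e, n01, n02, n12, norm_zero] at E2z
  norm_num [Fin.ext_iff] at E2z
  have T1_0 : c (Real.pi/2) (s4e 0) = c (Real.pi/2) (-s4e 0) := by linear_combination (E1p2k0 - E2p2k0 - E1m2k0 + E2m2k0 - 2*E1p1k0 + 2*E2p1k0 + 2*E1m1k0 - 2*E2m1k0)/12
  have T1_1 : c (Real.pi/2) (s4e 1) = c (Real.pi/2) (-s4e 1) := by linear_combination (E1p2k1 - E2p2k1 - E1m2k1 + E2m2k1 - 2*E1p1k1 + 2*E2p1k1 + 2*E1m1k1 - 2*E2m1k1)/12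
  have T1_2 : c (Real.pi/2) (s4e 2) = c (Real.pi/2) (-s4e 2) := by linear_combination (E1p2k2 - E2p2k2 - E1m2k2 + E2m2k2 - 2*E1p1k2 + 2*E2p1k2 + 2*E1m1k2 - 2*E2m1k2)/12
  have T2_0 : b (Real.pi/2) 0 0 = (b (Real.pi/2) (s4e 0) 0 + b (Real.pi/2) (-s4e 0) 0) / 2 := by linear_combination (-E1p2k0 - E2p2k0 + E1m2k0 + E2m2k0 + 2*E1p1k0 + 2*E2p1k0 - 2*E1m1k0 - 2*E2m1k0)/24
  have T2_1 : b (Real.pi/2) 0 1 = (b (Real.pi/2) (s4e 0) 1 + b (Real.pi/2) (-s4e 0) 1) / 2 := by linear_combination (-E1p2k1 - E2p2k1 + E1m2k1 + E2m2k1 + 2*E1p1k1 + 2*E2p1k1 - 2*E1m1k1 - 2*E2m1k1)/24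
  have T2_2 : b (Real.pi/2) 0 2 = (b (Real.pi/2) (s4e 0) 2 + b (Real.pi/2) (-s4e 0) 2) / 2 := by linear_combination (-E1p2k2 - E2p2k2 + E1m2k2 + E2m2k2 + 2*E1p1k2 + 2*E2p1k2 - 2*E1m1k2 - 2*E2m1k2)/24
  have T3 : c (Real.pi/2) 0 = (c (Real.pi/2) (s4e 0) + c (Real.pi/2) (-s4e 0)) / 2 := by linear_combination (-E1p2k0 - E2p2k0 - E1m2k0 - E2m2k0 + 4*E1p1k0 + 4*E2p1k0 + 4*E1m1k0 + 4*E2m1k0)/48 - E1z/8 - E2z/8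
  have T4_1 : b (Real.pi/2) (s4e 1) 1 - b (Real.pi/2) (-s4e 1) 1 = b (Real.pi/2) (s4e 0) 0 - b (Real.pi/2) (-s4e 0) 0 := by linear_combination (E1p1k1 - E2p1k1 + E1m1k1 - E2m1k1 - E1p1k0 + E2p1k0 - E1m1k0 + E2m1k0)/2
  have T4_2 : b (Real.pi/2) (s4e 2) 2 - b (Real.pi/2) (-s4e 2) 2 = b (Real.pi/2) (s4e 0) 0 - b (Real.pi/2) (-s4e 0) 0 := by linear_combination (E1p1k2 - E2p1k2 + E1m1k2 - E2m1k2 - E1p1k0 + E2p1k0 - E1m1k0 + E2m1k0)/2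
  have T5_01 : (b (Real.pi/2) (s4e 0) 1 - b (Real.pi/2) (-s4e 0) 1) + (b (Real.pi/2) (s4e 1) 0 - b (Real.pi/2) (-s4e 1) 0) = 0 := by linear_combination (E1x01 - E2x01 + E1xm01 - E2xm01 - E1p1k0 + E2p1k0 - E1m1k0 + E2m1k0 - E1p1k1 + E2p1k1 - E1m1k1 + E2m1k1)/2 + E1z - E2z
  have T5_02 : (b (Real.pi/2) (s4e 0) 2 - b (Real.pi/2) (-s4e 0) 2) + (b (Real.pi/2) (s4e 2) 0 - b (Real.pi/2) (-s4e 2) 0) = 0 := by linear_combination (E1x02 - E2x02 + E1xm02 - E2xm02 - E1p1k0 + E2p1k0 - E1m1k0 + E2m1k0 - E1p1k2 + E2p1k2 - E1m1k2 + E2m1k2)/2 + E1z - E2z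
  have T5_12 : (b (Real.pi/2) (s4e 1) 2 - b (Real.pi/2) (-s4e 1) 2) + (b (Real.pi/2) (s4e 2) 1 - b (Real.pi/2) (-s4e 2) 1) = 0 := by linear_combination (E1x12 - E2x12 + E1xm12 - E2xm12 - E1p1k1 + E2p1k1 - E1m1k1 + E2m1k1 - E1p1k2 + E2p1k2 - E1m1k2 + E2m1k2)/2 + E1z - E2z
  have hb0' : ∀ (i : Fin 3) (w : E3), b 0 w i =
      (a (Real.pi/2) (s4e i) - a (Real.pi/2) (-s4e i)) / 2
      - (b (Real.pi/2) (s4e i) 0 - b (Real.pi/2) (-s4e i) 0) / 2 * w 0 - (b (Real.pi/2) (s4e i) 1 - b (Real.pi/2) (-s4e i) 1) / 2 * w 1 - (b (Real.pi/2) (s4e i) 2 - b (Real.pi/2) (-s4e i) 2) / 2 * w 2 := by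
    intro i w
    have h := hb0 i w
    have t : c (Real.pi/2) (s4e i) = c (Real.pi/2) (-s4e i) := by
      fin_cases i
      · exact T1_0
      · exact T1_1
      · exact T1_2
    linear_combination h + (‖w‖ ^ 2 / 2) * t
  have hc0' : ∀ w : E3, c 0 w = (a (Real.pi/2) (s4e 0) + a (Real.pi/2) (-s4e 0)) / 2 - a (Real.pi/2) 0 := by
    intro w
    linear_combination hc0 w + w 0 * T2_0 + w 1 * T2_1 + w 2 * T2_2 - ‖w‖ ^ 2 * T3
  refine ⟨a (Real.pi/2) 0, (((a (Real.pi/2) (s4e 0) - a (Real.pi/2) (-s4e 0)) / 2) • s4e 0 + ((a (Real.pi/2) (s4e 1) - a (Real.pi/2) (-s4e 1)) / 2) • s4e 1 + ((a (Real.pi/2) (s4e 2) - a (Real.pi/2) (-s4e 2)) / 2) • s4e 2), b (Real.pi/2) 0, ((c (Real.pi/2) 0 + ((a (Real.pi/2) (s4e 0) + a (Real.pi/2) (-s4e 0)) / 2 - a (Real.pi/2) 0)) / 2), ((b (Real.pi/2) (s4e 0) 0 - b (Real.pi/2) (-s4e 0) 0) / 4), ((c (Real.pi/2) 0 - ((a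 (Real.pi/2) (s4e 0) + a (Real.pi/2) (-s4e 0)) / 2 - a (Real.pi/2) 0)) / 2), (-((b (Real.pi/2) (s4e 0) 1 - b (Real.pi/2) (-s4e 0) 1) / 2)), (-((b (Real.pi/2) (s4e 0) 2 - b (Real.pi/2) (-s4e 0) 2) / 2)), (-((b (Real.pi/2) (s4e 1) 2 - b (Real.pi/2) (-s4e 1) 2) / 2)), ?_⟩
  intro t ht x v
  have key : a t x + dot3 (b t x) v + c t x * ‖v‖ ^ 2
      = a 0 (Xrot t x v) + dot3 (b 0 (Xrot t x v)) (Vrot t x v) + c 0 (Xrot t x v) * ‖Vrot t x v‖ ^ 2 :=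
    hchar t ht x v
  rw [key]
  set XX := Xrot t x v with hXX
  set VV := Vrot t x v with hVV
  have hav0 : (((a (Real.pi/2) (s4e 0) - a (Real.pi/2) (-s4e 0)) / 2) • s4e 0 + ((a (Real.pi/2) (s4e 1) - a (Real.pi/2) (-s4e 1)) / 2) • s4e 1 + ((a (Real.pi/2) (s4e 2) - a (Real.pi/2) (-s4e 2)) / 2) • s4e 2) 0 = (a (Real.pi/2) (s4e 0) - a (Real.pi/2) (-s4e 0)) / 2 := by
    norm_num [s4_add_apply, s4_smul_apply, s4e_apply, Fin.ext_iff]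
  have hav1 : (((a (Real.pi/2) (s4e 0) - a (Real.pi/2) (-s4e 0)) / 2) • s4e 0 + ((a (Real.pi/2) (s4e 1) - a (Real.pi/2) (-s4e 1)) / 2) • s4e 1 + ((a (Real.pi/2) (s4e 2) - a (Real.pi/2) (-s4e 2)) / 2) • s4e 2) 1 = (a (Real.pi/2) (s4e 1) - a (Real.pi/2) (-s4e 1)) / 2 := by
    norm_num [s4_add_apply, s4_smul_apply, s4e_apply, Fin.ext_iff]
  have hav2 : (((a (Real.pi/2) (s4e 0) - a (Real.pi/2) (-s4e 0)) / 2) • s4e 0 + ((a (Real.pi/2) (s4e 1) - a (Real.pi/2) (-s4e 1)) / 2) • s4e 1 + ((a (Real.pi/2) (s4e 2) - a (Real.pi/2) (-s4e 2)) / 2) • s4e 2) 2 = (a (Real.pi/2) (s4e 2) - a (Real.pi/2) (-s4e 2)) / 2 := by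
    norm_num [s4_add_apply, s4_smul_apply, s4e_apply, Fin.ext_iff]
  have hr10 : XX 1 * VV 0 - XX 0 * VV 1 = x 1 * v 0 - x 0 * v 1 := by
    have e1 : XX 1 = Real.cos t * x 1 - Real.sin t * v 1 := rfl
    have e2 : XX 0 = Real.cos t * x 0 - Real.sin t * v 0 := rfl
    have e3 : VV 1 = Real.sin t * x 1 + Real.cos t * v 1 := rfl
    have e4 : VV 0 = Real.sin t * x 0 + Real.cos t * v 0 := rfl
    rw [e1, e2, e3, e4]
    linear_combination (x 1 * v 0 - x 0 * v 1) * Real.sin_sq_add_cos_sq t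
  have hr20 : XX 2 * VV 0 - XX 0 * VV 2 = x 2 * v 0 - x 0 * v 2 := by
    have e1 : XX 2 = Real.cos t * x 2 - Real.sin t * v 2 := rfl
    have e2 : XX 0 = Real.cos t * x 0 - Real.sin t * v 0 := rfl
    have e3 : VV 2 = Real.sin t * x 2 + Real.cos t * v 2 := rfl
    have e4 : VV 0 = Real.sin t * x 0 + Real.cos t * v 0 := rfl
    rw [e1, e2, e3, e4]
    linear_combination (x 2 * v 0 - x 0 * v 2) * Real.sin_sq_add_cos_sq t
  have hr21 : XX 2 * VV 1 - XX 1 * VV 2 = x 2 * v 1 - x 1 * v 2 := by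
    have e1 : XX 2 = Real.cos t * x 2 - Real.sin t * v 2 := rfl
    have e2 : XX 1 = Real.cos t * x 1 - Real.sin t * v 1 := rfl
    have e3 : VV 2 = Real.sin t * x 2 + Real.cos t * v 2 := rfl
    have e4 : VV 1 = Real.sin t * x 1 + Real.cos t * v 1 := rfl
    rw [e1, e2, e3, e4]
    linear_combination (x 2 * v 1 - x 1 * v 2) * Real.sin_sq_add_cos_sq t
  have hEQ1 : ((-((b (Real.pi/2) (s4e 0) 0 - b (Real.pi/2) (-s4e 0) 0) / 2)) * XX 0 + (-((b (Real.pi/2) (s4e 0) 1 - b (Real.pi/2) (-s4e 0) 1) / 2)) * XX 1 + (-((b (Real.pi/2) (s4e 0) 2 - b (Real.pi/2) (-s4e 0) 2) / 2)) * XX 2) * VV 0 + ((-((b (Real.pi/2) (s4e 1) 0 - b (Real.pi/2) (-s4e 1) 0) / 2)) * XX 0 + (-((b (Real.pi/2) (s4e 1) 1 - b (Real.pi/2) (-s4e 1) 1) / 2)) * XX 1 + (-((b (Real.pi/2) (s4e 1) 2 - b (Real.pi/2) (-s4e 1) 2) / 2)) * XX 2) * VV 1 + ((-((b (Real.pi/2)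 (s4e 2) 0 - b (Real.pi/2) (-s4e 2) 0) / 2)) * XX 0 + (-((b (Real.pi/2) (s4e 2) 1 - b (Real.pi/2) (-s4e 2) 1) / 2)) * XX 1 + (-((b (Real.pi/2) (s4e 2) 2 - b (Real.pi/2) (-s4e 2) 2) / 2)) * XX 2) * VV 2
      = (-((b (Real.pi/2) (s4e 0) 0 - b (Real.pi/2) (-s4e 0) 0) / 2)) * (XX 0 * VV 0 + XX 1 * VV 1 + XX 2 * VV 2)
        + (-((b (Real.pi/2) (s4e 0) 1 - b (Real.pi/2) (-s4e 0) 1) / 2)) * (x 1 * v 0 - x 0 * v 1) + (-((b (Real.pi/2) (s4e 0) 2 - b (Real.pi/2) (-s4e 0) 2) / 2)) * (x 2 * v 0 - x 0 * v 2) + (-((b (Real.pi/2) (s4e 1) 2 - b (Real.pi/2) (-s4e 1) 2) / 2)) * (x 2 * v 1 - x 1 * v 2) := by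
    linear_combination (-(XX 1 * VV 1)/2) * T4_1 + (-(XX 2 * VV 2)/2) * T4_2
      + (-(XX 0 * VV 1)/2) * T5_01 + (-(XX 0 * VV 2)/2) * T5_02 + (-(XX 1 * VV 2)/2) * T5_12
      + (-((b (Real.pi/2) (s4e 0) 1 - b (Real.pi/2) (-s4e 0) 1) / 2)) * hr10 + (-((b (Real.pi/2) (s4e 0) 2 - b (Real.pi/2) (-s4e 0) 2) / 2)) * hr20 + (-((b (Real.pi/2) (s4e 1) 2 - b (Real.pi/2) (-s4e 1) 2) / 2)) * hr21
  rw [ha0 XX, s4_dot3_exp (b 0 XX) VV, hb0' 0 XX, hb0' 1 XX, hb0' 2 XX, hc0' XX]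
  rw [s4_dot3_exp (b (Real.pi/2) 0) XX, s4_dot3_exp (((a (Real.pi/2) (s4e 0) - a (Real.pi/2) (-s4e 0)) / 2) • s4e 0 + ((a (Real.pi/2) (s4e 1) - a (Real.pi/2) (-s4e 1)) / 2) • s4e 1 + ((a (Real.pi/2) (s4e 2) - a (Real.pi/2) (-s4e 2)) / 2) • s4e 2) VV, s4_dot3_exp XX VV]
  rw [hav0, hav1, hav2]
  linear_combination hEQ1
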